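/- arXiv:2604.14804 — 3 statements merged into one kernel-verified Lean document; each statement's English description precedes it below -/
import Mathlib

section
/- Let f : ℝ → ℝ be a C¹ function that is L-periodic (L > 0). Then the oscillation of f over one period satisfies sup f − inf f ≤ (1/2) · L^{1/2} · (∫₀ᴸ f'(x)² dx)^{1/2}. -/
/-!
Let `a`, `b` be points where `f` attains its maximum and minimum. On the circle `ℝ / Lℤ` they are
joined by two arcs of lengths `s` and `t` with `s + t = L`, and the fundamental theorem of calculus
with Cauchy–Schwarz on each arc gives `(f a - f b)² ≤ s I₁` and `(f a - f b)² ≤ t I₂`, where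
`I₁ + I₂ = ∫₀ᴸ f'²`. Combining them, `L (f a - f b)² ≤ s t (I₁ + I₂) ≤ L² / 4 · ∫₀ᴸ f'²`.
-/

open Function MeasureTheory intervalIntegral

theorem Function.Periodic.deriv {𝕜 F : Type*} [NontriviallyNormedField 𝕜] [NormedAddCommGroup F]
    [NormedSpace 𝕜 F] {f : 𝕜 → F} {c : 𝕜} (h : Periodic f c) : Periodic (_root_.deriv f) c :=
  fun x => by rw [← deriv_comp_add_const, funext h]

theorem intervalIntegral.sq_integral_le_mul_integral_sq {g : ℝ → ℝ} {a b : ℝ} (hab : a ≤ b)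
    (hg : IntervalIntegrable g volume a b)
    (hg2 : IntervalIntegrable (fun x => g x ^ 2) volume a b) :
    (∫ x in a..b, g x) ^ 2 ≤ (b - a) * ∫ x in a..b, g x ^ 2 := by
  rcases hab.eq_or_lt with rfl | hlt
  · simp
  obtain ⟨A, hA⟩ : ∃ A, ∫ x in a..b, g x = A := ⟨_, rfl⟩
  have hvar : 0 ≤ ∫ x in a..b, ((b - a) * g x - A) ^ 2 :=
    integral_nonneg hab fun x _ => sq_nonneg _
  have hexpand : ∫ x in a..b, ((b - a) * g x - A) ^ 2
      = (b - a) * ((b - a) * (∫ x in a..b, g x ^ 2) - A ^ 2) := by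
    have hsq : ∀ x, ((b - a) * g x - A) ^ 2
        = (b - a) ^ 2 * g x ^ 2 - 2 * (b - a) * A * g x + A ^ 2 := fun x => by ring
    simp_rw [hsq]
    rw [integral_add ((hg2.const_mul _).sub (hg.const_mul _)) intervalIntegrable_const,
      integral_sub (hg2.const_mul _) (hg.const_mul _), integral_const_mul, integral_const_mul,
      integral_const, smul_eq_mul, hA]
    ring
  have := nonneg_of_mul_nonneg_right (hexpand ▸ hvar) (sub_pos.2 hlt)
  rw [hA]
  linarith

theorem sq_sub_le_mul_integral_deriv_sq {f : ℝ → ℝ} (hf : ContDiff ℝ 1 f) {a b : ℝ}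
    (hab : a ≤ b) : (f b - f a) ^ 2 ≤ (b - a) * ∫ x in a..b, deriv f x ^ 2 := by
  have hf' : Continuous (deriv f) := hf.continuous_deriv le_rfl
  rw [← integral_deriv_eq_sub (fun x _ => (hf.differentiable one_ne_zero).differentiableAt)
    (hf'.intervalIntegrable _ _)]
  exact sq_integral_le_mul_integral_sq hab (hf'.intervalIntegrable _ _)
    ((hf'.pow 2).intervalIntegrable _ _)

theorem four_mul_sq_le_mul_add_of_sq_le_mul {D s t I J : ℝ} (hs : 0 ≤ s) (ht : 0 ≤ t)
    (hst : 0 < s + t) (hIJ : 0 ≤ I + J) (hI : D ^ 2 ≤ s * I) (hJ : D ^ 2 ≤ t * J) :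
    4 * D ^ 2 ≤ (s + t) * (I + J) := by
  have h : (s + t) * (4 * D ^ 2) ≤ (s + t) * ((s + t) * (I + J)) := by
    nlinarith [mul_le_mul_of_nonneg_left hI ht, mul_le_mul_of_nonneg_left hJ hs,
      mul_nonneg (sq_nonneg (s - t)) hIJ]
  exact le_of_mul_le_mul_left h hst

namespace Function.Periodic

variable {f : ℝ → ℝ} {L : ℝ}

theorem four_mul_sq_sub_le (hf : ContDiff ℝ 1 f) (hper : Periodic f L) (hL : 0 < L)
    {a b : ℝ} (hba : b ≤ a) (hab : a ≤ b + L) :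
    4 * (f a - f b) ^ 2 ≤ L * ∫ x in 0..L, _root_.deriv f x ^ 2 := by
  have hint : ∀ u v, IntervalIntegrable (fun x => _root_.deriv f x ^ 2) volume u v :=
    ((hf.continuous_deriv le_rfl).pow 2).intervalIntegrable
  have hsplit : (∫ x in b..a, _root_.deriv f x ^ 2) + ∫ x in a..b + L, _root_.deriv f x ^ 2
      = ∫ x in 0..L, _root_.deriv f x ^ 2 := by
    rw [integral_add_adjacent_intervals (hint _ _) (hint _ _)]
    simpa using (hper.deriv.comp (· ^ 2)).intervalIntegral_add_eq b 0
  have h₁ := sq_sub_le_mul_integral_deriv_sq hf hba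
  have h₂ := sq_sub_le_mul_integral_deriv_sq hf hab
  rw [hper b, ← neg_sub, neg_sq] at h₂
  have := four_mul_sq_le_mul_add_of_sq_le_mul (sub_nonneg.2 hba) (sub_nonneg.2 hab)
    (by linarith) (hsplit ▸ integral_nonneg hL.le fun x _ => sq_nonneg _) h₁ h₂
  rwa [hsplit, show a - b + (b + L - a) = L by ring] at this

theorem sub_le_half_sqrt_mul_sqrt (hf : ContDiff ℝ 1 f) (hper : Periodic f L) (hL : 0 < L)
    (a b : ℝ) : f a - f b ≤ 1 / 2 * √L * √(∫ x in 0..L, _root_.deriv f x ^ 2) := by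
  obtain ⟨hba, hab⟩ := toIcoMod_mem_Ico hL b a
  have h := hper.four_mul_sq_sub_le hf hL hba hab.le
  rw [← self_sub_toIcoDiv_zsmul, hper.sub_zsmul_eq] at h
  refine le_of_sq_le_sq ?_ (by positivity)
  rw [mul_pow, mul_pow, Real.sq_sqrt hL.le,
    Real.sq_sqrt (integral_nonneg hL.le fun x _ => sq_nonneg _)]
  linarith

end Function.Periodic

theorem stmt_6 (f : ℝ → ℝ) (L : ℝ) (hL : 0 < L)
    (hf : ContDiff ℝ 1 f)
    (hper : ∀ x, f (x + L) = f x) :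
    sSup (f '' Set.Icc 0 L) - sInf (f '' Set.Icc 0 L)
      ≤ (1/2) * Real.sqrt L * Real.sqrt (∫ x in (0:ℝ)..L, (deriv f x)^2) := by
  have hne : (Set.Icc 0 L).Nonempty := Set.nonempty_Icc.2 hL.le
  obtain ⟨a, -, hmax⟩ := isCompact_Icc.exists_sSup_image_eq hne hf.continuous.continuousOn
  obtain ⟨b, -, hmin⟩ := isCompact_Icc.exists_sInf_image_eq hne hf.continuous.continuousOn
  rw [hmax, hmin]
  exact Periodic.sub_le_half_sqrt_mul_sqrt hf hper hL a b
end

section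
/- Let σ : ℝ → ℝ be smooth, positive, L-periodic, and suppose there exists a point x₀ with σ(x₀) = c for a constant c > 0. If p ≠ 0 is a real number, then sup σ^{p/2} − inf σ^{p/2} ≤ (|p|/4) · (∫₀ᴸ σ(s)^p ds)^{1/2} · (∫₀ᴸ σ'(s)²/σ(s)² ds)^{1/2}. -/
open MeasureTheory Set

private lemma memL2_cont {h : ℝ → ℝ} (hh : Continuous h) (a b : ℝ) :
    MemLp h (ENNReal.ofReal 2) (volume.restrict (Set.Ioc a b)) := by
  obtain ⟨C, hC⟩ := isCompact_Icc.exists_bound_of_continuousOn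
    (hh.continuousOn : ContinuousOn h (Set.Icc a b))
  have hfin : IsFiniteMeasure (volume.restrict (Set.Ioc a b)) := by
    constructor
    rw [Measure.restrict_apply_univ]
    exact measure_Ioc_lt_top
  exact MemLp.of_bound hh.aestronglyMeasurable C
    ((ae_restrict_iff' measurableSet_Ioc).2
      (ae_of_all _ fun x hx => hC x (Set.Ioc_subset_Icc_self hx)))

private lemma cs_interval {u v : ℝ → ℝ} (hu : Continuous u) (hv : Continuous v)
    (hu0 : ∀ x, 0 ≤ u x) (hv0 : ∀ x, 0 ≤ v x) {a b : ℝ} (hab : a ≤ b) :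
    ∫ s in a..b, u s * v s ≤
      Real.sqrt (∫ s in a..b, u s ^ 2) * Real.sqrt (∫ s in a..b, v s ^ 2) := by
  have h2 : (2:ℝ).HolderConjugate 2 := Real.HolderConjugate.two_two
  have key := integral_mul_le_Lp_mul_Lq_of_nonneg h2
    (μ := volume.restrict (Set.Ioc a b)) (f := u) (g := v)
    (ae_of_all _ hu0) (ae_of_all _ hv0) (memL2_cont hu a b) (memL2_cont hv a b)
  simp_rw [show (2:ℝ) = ((2:ℕ):ℝ) by norm_num, Real.rpow_natCast] at key
  rw [intervalIntegral.integral_of_le hab, intervalIntegral.integral_of_le hab,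
    intervalIntegral.integral_of_le hab, Real.sqrt_eq_rpow, Real.sqrt_eq_rpow]
  exact key

theorem stmt_7 (σ : ℝ → ℝ) (L : ℝ) (hL : 0 < L)
    (hσ : ContDiff ℝ (⊤ : ℕ∞) σ)
    (hpos : ∀ s, 0 < σ s)
    (hper : ∀ s, σ (s + L) = σ s)
    (c : ℝ) (hc : 0 < c) (x₀ : ℝ) (hx₀ : σ x₀ = c)
    (p : ℝ) (hp : p ≠ 0) :
    sSup ((fun s => σ s ^ (p/2)) '' Set.Icc 0 L)
      - sInf ((fun s => σ s ^ (p/2)) '' Set.Icc 0 L)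
      ≤ (|p| / 4) * Real.sqrt (∫ s in (0:ℝ)..L, σ s ^ p)
          * Real.sqrt (∫ s in (0:ℝ)..L, (deriv σ s)^2 / (σ s)^2) := by
  have hσc : Continuous σ := hσ.continuous
  have hdiff : Differentiable ℝ σ := hσ.differentiable (by simp)
  have hσ'c : Continuous (deriv σ) := hσ.continuous_deriv (by simp)
  set f : ℝ → ℝ := fun s => σ s ^ (p/2) with hf
  set g : ℝ → ℝ := fun s => deriv σ s * (p/2) * σ s ^ (p/2 - 1) with hg
  have hfc : Continuous f := hσc.rpow_const fun x => Or.inl (hpos x).ne'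
  have hgc : Continuous g :=
    (hσ'c.mul continuous_const).mul (hσc.rpow_const fun x => Or.inl (hpos x).ne')
  have hfd : ∀ x, HasDerivAt f (g x) x := fun x =>
    ((hdiff x).hasDerivAt).rpow_const (Or.inl (hpos x).ne')
  have hgint : ∀ a b : ℝ, IntervalIntegrable g volume a b := fun a b =>
    hgc.intervalIntegrable a b
  have hgaint : ∀ a b : ℝ, IntervalIntegrable (fun s => |g s|) volume a b := fun a b =>
    hgc.abs.intervalIntegrable a b
  have hftc : ∀ a b : ℝ, ∫ s in a..b, g s = f b - f a := fun a b =>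
    intervalIntegral.integral_eq_sub_of_hasDerivAt (fun x _ => hfd x) (hgint a b)
  have hderper : ∀ s, deriv σ (s + L) = deriv σ s := by
    intro s
    have hσeq : σ = fun x => σ (x + L) := funext fun x => (hper x).symm
    conv_rhs => rw [hσeq]
    rw [deriv_comp_add_const]
  have hfper : ∀ s, f (s + L) = f s := fun s => by simp only [hf, hper s]
  have hgabper : Function.Periodic (fun s => |g s|) L := fun s => by
    simp only [hg, hderper s, hper s]
  have hIper : ∀ t : ℝ, ∫ s in t..(t+L), |g s| = ∫ s in (0:ℝ)..L, |g s| := fun t => by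
    simpa using hgabper.intervalIntegral_add_eq t 0
  have key : ∀ a ∈ Set.Icc (0:ℝ) L, ∀ b ∈ Set.Icc (0:ℝ) L,
      2 * (f b - f a) ≤ ∫ s in (0:ℝ)..L, |g s| := by
    intro a ha b hb
    rcases le_total a b with hab | hab
    · have h1 : f b - f a ≤ ∫ s in a..b, |g s| := by
        rw [← hftc a b]
        exact (le_abs_self _).trans (intervalIntegral.abs_integral_le_integral_abs hab)
      have h2 : f b - f a ≤ ∫ s in b..(a+L), |g s| := by
        have hba : b ≤ a + L := hb.2.trans (by linarith [ha.1])
        have e : f b - f a = -(∫ s in b..(a+L), g s) := by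
          rw [hftc, hfper]; ring
        rw [e]
        exact (neg_le_abs _).trans (intervalIntegral.abs_integral_le_integral_abs hba)
      calc 2 * (f b - f a) = (f b - f a) + (f b - f a) := by ring
        _ ≤ (∫ s in a..b, |g s|) + ∫ s in b..(a+L), |g s| := add_le_add h1 h2
        _ = ∫ s in a..(a+L), |g s| :=
            intervalIntegral.integral_add_adjacent_intervals (hgaint a b) (hgaint b (a+L))
        _ = ∫ s in (0:ℝ)..L, |g s| := hIper a
    · have h1 : f b - f a ≤ ∫ s in b..a, |g s| := by
        have e : f b - f a = -(∫ s in b..a, g s) := by rw [hftc]; ring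
        rw [e]
        exact (neg_le_abs _).trans (intervalIntegral.abs_integral_le_integral_abs hab)
      have h2 : f b - f a ≤ ∫ s in a..(b+L), |g s| := by
        have hba : a ≤ b + L := ha.2.trans (by linarith [hb.1])
        have e : f b - f a = ∫ s in a..(b+L), g s := by
          rw [hftc, hfper]
        rw [e]
        exact (le_abs_self _).trans (intervalIntegral.abs_integral_le_integral_abs hba)
      calc 2 * (f b - f a) = (f b - f a) + (f b - f a) := by ring
        _ ≤ (∫ s in b..a, |g s|) + ∫ s in a..(b+L), |g s| := add_le_add h1 h2
        _ = ∫ s in b..(b+L), |g s| :=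
            intervalIntegral.integral_add_adjacent_intervals (hgaint b a) (hgaint a (b+L))
        _ = ∫ s in (0:ℝ)..L, |g s| := hIper b
  have hne : (Set.Icc (0:ℝ) L).Nonempty := ⟨0, le_refl 0, hL.le⟩
  obtain ⟨b, hbmem, hbmax⟩ := isCompact_Icc.exists_isMaxOn hne hfc.continuousOn
  obtain ⟨a, hamem, hamin⟩ := isCompact_Icc.exists_isMinOn hne hfc.continuousOn
  have hsup : sSup (f '' Set.Icc 0 L) = f b :=
    le_antisymm (csSup_le (hne.image f) (by rintro y ⟨x, hx, rfl⟩; exact hbmax hx))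
      (le_csSup (isCompact_Icc.image hfc).bddAbove ⟨b, hbmem, rfl⟩)
  have hinf : sInf (f '' Set.Icc 0 L) = f a :=
    le_antisymm (csInf_le (isCompact_Icc.image hfc).bddBelow ⟨a, hamem, rfl⟩)
      (le_csInf (hne.image f) (by rintro y ⟨x, hx, rfl⟩; exact hamin hx))
  rw [hsup, hinf]
  set u : ℝ → ℝ := fun s => σ s ^ (p/2) with hu
  set v : ℝ → ℝ := fun s => |deriv σ s| / σ s with hv
  have habs : ∀ s, |g s| = (|p|/2) * (u s * v s) := by
    intro s
    have h1 : σ s ^ (p/2 - 1) = σ s ^ (p/2) / σ s := by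
      rw [Real.rpow_sub (hpos s), Real.rpow_one]
    have hup : (0:ℝ) < σ s ^ (p/2) := Real.rpow_pos_of_pos (hpos s) _
    simp only [hg, hu, hv, h1, abs_mul, abs_div, abs_two,
      abs_of_pos hup, abs_of_pos (hpos s)]
    field_simp
  have hI : ∫ s in (0:ℝ)..L, |g s| = (|p|/2) * ∫ s in (0:ℝ)..L, u s * v s := by
    simp_rw [habs]
    rw [intervalIntegral.integral_const_mul]
  have huc : Continuous u := hfc
  have hvc : Continuous v := hσ'c.abs.div hσc fun x => (hpos x).ne'
  have hu0 : ∀ x, 0 ≤ u x := fun x => (Real.rpow_pos_of_pos (hpos x) _).le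
  have hv0 : ∀ x, 0 ≤ v x := fun x => div_nonneg (abs_nonneg _) (hpos x).le
  have hcs := cs_interval huc hvc hu0 hv0 hL.le
  have hu2 : ∀ s, u s ^ 2 = σ s ^ p := fun s => by
    rw [hu, sq, ← Real.rpow_add (hpos s), show p/2 + p/2 = p by ring]
  have hv2 : ∀ s, v s ^ 2 = (deriv σ s)^2 / (σ s)^2 := fun s => by
    rw [hv, div_pow, sq_abs]
  simp_rw [hu2, hv2] at hcs
  have main : f b - f a ≤ (1/2) * ((|p|/2) * ∫ s in (0:ℝ)..L, u s * v s) := by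
    rw [← hI]
    linarith [key a hamem b hbmem]
  calc f b - f a ≤ (1/2) * ((|p|/2) * ∫ s in (0:ℝ)..L, u s * v s) := main
    _ ≤ (1/2) * ((|p|/2) * (Real.sqrt (∫ s in (0:ℝ)..L, σ s ^ p)
          * Real.sqrt (∫ s in (0:ℝ)..L, (deriv σ s)^2 / (σ s)^2))) := by
        have h3 := mul_le_mul_of_nonneg_left hcs
          (by positivity : (0:ℝ) ≤ |p|/2)
        linarith
    _ = (|p| / 4) * Real.sqrt (∫ s in (0:ℝ)..L, σ s ^ p)
          * Real.sqrt (∫ s in (0:ℝ)..L, (deriv σ s)^2 / (σ s)^2) := by ring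
end

section
/- Let σ : ℝ → ℝ be smooth, positive, L-periodic, and set E = ∫₀ᴸ σ'(s)²/σ(s)² ds. Suppose there is some point where σ equals π^{-2/3} A^{2/3} for given A > 0, and that ∫₀ᴸ σ ds = 2A. Then sup σ ≤ ((√2/4) A^{1/2} E^{1/2} + π^{-1/3} A^{1/3})². -/
open Real

theorem stmt_8 (σ : ℝ → ℝ) (L : ℝ) (hL : 0 < L)
    (hσ : ContDiff ℝ (⊤ : ℕ∞) σ)
    (hpos : ∀ s, 0 < σ s)
    (hper : ∀ s, σ (s + L) = σ s)
    (A : ℝ) (hA : 0 < A)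
    (E : ℝ) (hE : E = ∫ s in (0:ℝ)..L, (deriv σ s)^2 / (σ s)^2)
    (hval : ∃ x₀, σ x₀ = π ^ (-(2:ℝ)/3) * A ^ ((2:ℝ)/3))
    (harea : (∫ s in (0:ℝ)..L, σ s) = 2 * A) :
    ∀ s, σ s ≤ ((Real.sqrt 2 / 4) * A ^ ((1:ℝ)/2) * E ^ ((1:ℝ)/2)
        + π ^ (-(1:ℝ)/3) * A ^ ((1:ℝ)/3))^2 := by
  intro s
  obtain ⟨x₀', hx₀'⟩ := hval
  have hperσ : Function.Periodic σ L := hper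
  have hdiff : Differentiable ℝ σ := hσ.differentiable (by simp)
  have hdc : Continuous (deriv σ) := hσ.continuous_deriv (by simp)
  have hcσ : Continuous σ := hσ.continuous
  have hdper : Function.Periodic (deriv σ) L := by
    intro x
    have hfun : (fun y => σ (y + L)) = σ := funext hper
    calc deriv σ (x + L) = deriv (fun y => σ (y + L)) x := (deriv_comp_add_const ..).symm
      _ = deriv σ x := by rw [hfun]
  -- relocate x₀ into [s, s+L]
  set n : ℤ := ⌊(x₀' - s) / L⌋ with hn
  set x₀ : ℝ := x₀' - n * L with hx₀def
  have hx₀ : σ x₀ = π ^ (-(2:ℝ)/3) * A ^ ((2:ℝ)/3) := by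
    rw [hx₀def]
    calc σ (x₀' - n * L) = σ x₀' := hperσ.sub_int_mul_eq n
      _ = _ := hx₀'
  have hfl1 := Int.sub_floor_div_mul_nonneg (x₀' - s) hL
  have hfl2 := Int.sub_floor_div_mul_lt (x₀' - s) hL
  have h1 : s ≤ x₀ := by rw [hx₀def, hn]; linarith
  have h2 : x₀ ≤ s + L := by rw [hx₀def, hn]; linarith
  -- square root of σ and its derivative
  set f : ℝ → ℝ := fun t => Real.sqrt (σ t) with hf
  set g : ℝ → ℝ := fun t => deriv σ t / (2 * Real.sqrt (σ t)) with hg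
  have hsq : ∀ t, 0 < Real.sqrt (σ t) := fun t => Real.sqrt_pos.2 (hpos t)
  have hsqr : ∀ t, Real.sqrt (σ t) ^ 2 = σ t := fun t => Real.sq_sqrt (hpos t).le
  have hfd : ∀ t, HasDerivAt f (g t) t := by
    intro t
    have h := (Real.hasDerivAt_sqrt (ne_of_gt (hpos t))).comp t (hdiff t).hasDerivAt
    rw [show g t = 1 / (2 * Real.sqrt (σ t)) * deriv σ t by rw [hg]; ring]
    exact h
  have hgc : Continuous g := by
    apply hdc.div (continuous_const.mul (hcσ.sqrt))
    intro t
    have := hsq t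
    exact (mul_pos two_pos (hsq t)).ne'
  have hftc : ∀ a b : ℝ, f b - f a = ∫ t in a..b, g t := fun a b =>
    (intervalIntegral.integral_eq_sub_of_hasDerivAt (fun x _ => hfd x)
      (hgc.intervalIntegrable a b)).symm
  have habs : ∀ a b : ℝ, a ≤ b → |f b - f a| ≤ ∫ t in a..b, |g t| := by
    intro a b hab
    rw [hftc a b]
    exact intervalIntegral.abs_integral_le_integral_abs hab
  have hiadd : (∫ t in s..x₀, |g t|) + (∫ t in x₀..(s+L), |g t|)
      = ∫ t in s..(s+L), |g t| :=
    intervalIntegral.integral_add_adjacent_intervals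
      ((hgc.abs).intervalIntegrable _ _) ((hgc.abs).intervalIntegrable _ _)
  have hfs : f (s + L) = f s := by rw [hf]; simp [hper s]
  have key1 : 2 * f s ≤ 2 * f x₀ + ∫ t in s..(s+L), |g t| := by
    have e1 := habs s x₀ h1
    have e2 := habs x₀ (s+L) h2
    have e3 : f s - f x₀ ≤ |f x₀ - f s| := by
      rw [abs_sub_comm]; exact le_abs_self _
    have e4 : f (s+L) - f x₀ ≤ |f (s+L) - f x₀| := le_abs_self _
    rw [hfs] at e2 e4
    linarith
  -- periodic shifts of the integrals
  have hEs : (∫ t in s..(s+L), (deriv σ t)^2 / (σ t)^2) = E := by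
    rw [hE]
    have hp : Function.Periodic (fun t => (deriv σ t)^2 / (σ t)^2) L := by
      intro x; simp only [hdper x, hper x]
    have := hp.intervalIntegral_add_eq s 0
    simpa using this
  have hAs : (∫ t in s..(s+L), σ t) = 2 * A := by
    have := hperσ.intervalIntegral_add_eq s 0
    rw [← harea]
    simpa using this
  have hE0 : 0 ≤ E := by
    rw [hE]
    apply intervalIntegral.integral_nonneg hL.le
    intro u _
    positivity
  -- Cauchy-Schwarz via AM-GM for every τ > 0
  have hI2 : ∀ τ : ℝ, 0 < τ → (∫ t in s..(s+L), |deriv σ t| / Real.sqrt (σ t))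
      ≤ E / (2*τ) + τ * A := by
    intro τ hτ
    have hc1 : Continuous (fun t => |deriv σ t| / Real.sqrt (σ t)) := by
      apply hdc.abs.div (hcσ.sqrt)
      intro t; exact (hsq t).ne'
    have hc2 : Continuous (fun t => (1/(2*τ)) * ((deriv σ t)^2/(σ t)^2) + (τ/2) * σ t) := by
      apply Continuous.add
      · apply Continuous.mul continuous_const
        apply Continuous.div (hdc.pow 2) (hcσ.pow 2)
        intro t; exact pow_ne_zero 2 (hpos t).ne'
      · exact continuous_const.mul hcσ
    have hmono : (∫ t in s..(s+L), |deriv σ t| / Real.sqrt (σ t))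
        ≤ ∫ t in s..(s+L), ((1/(2*τ)) * ((deriv σ t)^2/(σ t)^2) + (τ/2) * σ t) := by
      apply intervalIntegral.integral_mono_on (by linarith)
        (hc1.intervalIntegrable _ _) (hc2.intervalIntegrable _ _)
      intro t _
      set X : ℝ := |deriv σ t| / σ t with hX
      set r : ℝ := Real.sqrt (σ t) with hr
      have hr0 : 0 < r := hsq t
      have hr2 : r ^ 2 = σ t := hsqr t
      have hL1 : |deriv σ t| / Real.sqrt (σ t) = X * r := by
        rw [hX, hr, ← hr2]
        field_simp
        rw [Real.sqrt_sq hr0.le]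
      have hX2 : (deriv σ t)^2/(σ t)^2 = X ^ 2 := by
        rw [hX, div_pow, sq_abs]
      rw [hL1, hX2]
      have hkey : (1/(2*τ)) * X ^ 2 + (τ/2) * σ t - X * r = (X - τ * r) ^ 2 / (2 * τ) := by
        rw [← hr2]; field_simp; ring
      nlinarith [sq_nonneg (X - τ * r), div_nonneg (sq_nonneg (X - τ * r)) (by linarith : (0:ℝ) ≤ 2*τ)]
    have hsplit : (∫ t in s..(s+L), ((1/(2*τ)) * ((deriv σ t)^2/(σ t)^2) + (τ/2) * σ t))
        = (1/(2*τ)) * E + (τ/2) * (2*A) := by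
      rw [intervalIntegral.integral_add]
      · rw [intervalIntegral.integral_const_mul, intervalIntegral.integral_const_mul, hEs, hAs]
      · apply Continuous.intervalIntegrable
        apply Continuous.mul continuous_const
        apply Continuous.div (hdc.pow 2) (hcσ.pow 2)
        intro t; exact pow_ne_zero 2 (hpos t).ne'
      · exact (continuous_const.mul hcσ).intervalIntegrable _ _
    calc (∫ t in s..(s+L), |deriv σ t| / Real.sqrt (σ t))
        ≤ (1/(2*τ)) * E + (τ/2) * (2*A) := hmono.trans_eq hsplit
      _ = E / (2*τ) + τ * A := by ring
  -- conclude the sqrt bound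
  have hI3 : (∫ t in s..(s+L), |deriv σ t| / Real.sqrt (σ t)) ≤ Real.sqrt (2*A*E) := by
    rcases eq_or_lt_of_le hE0 with hE0' | hE0'
    · have hEz : E = 0 := hE0'.symm
      have hle : ∀ ε > (0:ℝ), (∫ t in s..(s+L), |deriv σ t| / Real.sqrt (σ t)) ≤ 0 + ε := by
        intro ε hε
        have := hI2 (ε / A) (by positivity)
        rw [hEz] at this
        have hεA : (ε / A) * A = ε := by field_simp
        simpa [hεA] using this
      have := le_of_forall_pos_le_add hle
      have hz : Real.sqrt (2*A*E) = 0 := by rw [hEz]; simp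
      linarith [this, hz.ge]
    · set u : ℝ := Real.sqrt E with hu
      set v : ℝ := Real.sqrt (2*A) with hv
      have hu0 : 0 < u := Real.sqrt_pos.2 hE0'
      have hv0 : 0 < v := Real.sqrt_pos.2 (by linarith)
      have hu2 : u ^ 2 = E := Real.sq_sqrt hE0
      have hv2 : v ^ 2 = 2*A := Real.sq_sqrt (by linarith)
      have hτ : 0 < u / v := by positivity
      have := hI2 (u/v) hτ
      have heq : E / (2*(u/v)) + (u/v) * A = u * v := by
        rw [← hu2, show A = v^2/2 by rw [hv2]; ring]
        field_simp
        ring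
      have hsq2 : Real.sqrt (2*A*E) = v * u := by
        rw [hv, hu, ← Real.sqrt_mul (by linarith)]
      rw [hsq2]
      linarith [heq ▸ this]
  -- relate ∫|g| to the integral above
  have hIg : (∫ t in s..(s+L), |g t|)
      = (1/2) * ∫ t in s..(s+L), |deriv σ t| / Real.sqrt (σ t) := by
    rw [← intervalIntegral.integral_const_mul]
    apply intervalIntegral.integral_congr
    intro t _
    rw [hg]
    simp only
    rw [abs_div, abs_of_pos (by have := hsq t; positivity : (0:ℝ) < 2 * Real.sqrt (σ t))]
    ring
  -- the bound on f s
  have hmain : f s ≤ f x₀ + (1/4) * Real.sqrt (2*A*E) := by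
    rw [hIg] at key1
    linarith
  -- rewrite f x₀
  have hπ : (0:ℝ) < π := Real.pi_pos
  have hfx₀ : f x₀ = π ^ (-(1:ℝ)/3) * A ^ ((1:ℝ)/3) := by
    rw [hf]
    simp only
    rw [hx₀, Real.sqrt_mul (by positivity), Real.sqrt_eq_rpow, Real.sqrt_eq_rpow,
      ← Real.rpow_mul hπ.le, ← Real.rpow_mul hA.le]
    norm_num
  have hsqrt2AE : (1/4) * Real.sqrt (2*A*E)
      = (Real.sqrt 2 / 4) * A ^ ((1:ℝ)/2) * E ^ ((1:ℝ)/2) := by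
    rw [show (2*A*E) = 2 * (A * E) by ring, Real.sqrt_mul (by norm_num : (0:ℝ) ≤ 2),
      Real.sqrt_mul hA.le]
    simp only [Real.sqrt_eq_rpow]
    ring
  have hfinal : f s ≤ (Real.sqrt 2 / 4) * A ^ ((1:ℝ)/2) * E ^ ((1:ℝ)/2)
      + π ^ (-(1:ℝ)/3) * A ^ ((1:ℝ)/3) := by
    rw [← hsqrt2AE, ← hfx₀]
    linarith
  have hσs : σ s = (f s) ^ 2 := (hsqr s).symm
  rw [hσs]
  exact pow_le_pow_left₀ (Real.sqrt_nonneg _) hfinal 2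
end
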